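/- Let G be a graph with no isolated vertices and uv a non-edge such that γ_tR(G + uv) < γ_tR(G). Then for any minimum-weight total Roman dominating function f on G + uv, the multiset {f(u), f(v)} is one of {2,2}, {2,1}, {2,0}, {1,1} (i.e., it is not the case that f(u) = 0 and f(v) ≤ 1, nor f(v) = 0 and f(u) ≤ 1). -/
import Mathlib


open SimpleGraph Finset

variable {V : Type*}

/-- `S` is a dominating set of `G`. -/
def Dominating (G : SimpleGraph V) (S : Finset V) : Prop :=
  ∀ v, v ∉ S → ∃ u ∈ S, G.Adj u v

/-- `S` is a total dominating set of `G`. -/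
def TotalDominating (G : SimpleGraph V) (S : Finset V) : Prop :=
  ∀ v : V, ∃ u ∈ S, G.Adj u v

/-- The domination number γ(G). -/
noncomputable def gamma (G : SimpleGraph V) [Fintype V] : ℕ :=
  sInf {n | ∃ S : Finset V, Dominating G S ∧ S.card = n}

/-- The total domination number γ_t(G). -/
noncomputable def gammaT (G : SimpleGraph V) [Fintype V] : ℕ :=
  sInf {n | ∃ S : Finset V, TotalDominating G S ∧ S.card = n}

/-- `f` is a total Roman dominating function on `G`. -/
def IsTRDF (G : SimpleGraph V) (f : V → ℕ) : Prop :=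
  (∀ v, f v ≤ 2) ∧ (∀ v, f v = 0 → ∃ u, G.Adj u v ∧ f u = 2) ∧
    (∀ v, 0 < f v → ∃ u, G.Adj u v ∧ 0 < f u)

/-- The total Roman domination number γ_tR(G). -/
noncomputable def gammaTR (G : SimpleGraph V) [Fintype V] : ℕ :=
  sInf {n | ∃ f : V → ℕ, IsTRDF G f ∧ ∑ v, f v = n}

/-- The graph `G + uv`. -/
def addEdge (G : SimpleGraph V) (u v : V) : SimpleGraph V :=
  G ⊔ SimpleGraph.fromEdgeSet {s(u, v)}

/-- The graph `G - uv`. -/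
def deleteEdge (G : SimpleGraph V) (u v : V) : SimpleGraph V :=
  G.deleteEdges {s(u, v)}

/-- `G` has no isolated vertices. -/
def NoIsolated (G : SimpleGraph V) : Prop := ∀ v : V, ∃ u, G.Adj u v

/-- The degree of `v` in `G`. -/
noncomputable def degreeN (G : SimpleGraph V) (v : V) : ℕ :=
  {u | G.Adj v u}.ncard


lemma addEdge_adj (G : SimpleGraph V) (u v a b : V) :
    (addEdge G u v).Adj a b ↔ G.Adj a b ∨ (a ≠ b ∧ ((a = u ∧ b = v) ∨ (a = v ∧ b = u))) := by
  simp only [addEdge, SimpleGraph.sup_adj, SimpleGraph.fromEdgeSet_adj,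
    Set.mem_singleton_iff, Sym2.eq_iff]
  tauto

lemma addEdge_comm (G : SimpleGraph V) (u v : V) : addEdge G u v = addEdge G v u := by
  ext a b
  rw [addEdge_adj, addEdge_adj]
  tauto

lemma key_trdf (G : SimpleGraph V) (u v : V) (f : V → ℕ)
    (hf : IsTRDF (addEdge G u v) f) (hu : f u = 0) (hv : f v ≤ 1) : IsTRDF G f := by
  obtain ⟨h1, h2, h3⟩ := hf
  refine ⟨h1, ?_, ?_⟩
  · intro w hw
    obtain ⟨x, hadj, hx⟩ := h2 w hw
    rw [addEdge_adj] at hadj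
    rcases hadj with hG | ⟨_, ⟨rfl, rfl⟩ | ⟨rfl, rfl⟩⟩
    · exact ⟨x, hG, hx⟩
    · omega
    · omega
  · intro w hw
    obtain ⟨x, hadj, hx⟩ := h3 w hw
    rw [addEdge_adj] at hadj
    rcases hadj with hG | ⟨_, ⟨rfl, rfl⟩ | ⟨rfl, rfl⟩⟩
    · exact ⟨x, hG, hx⟩
    · omega
    · omega

lemma gammaTR_le (G : SimpleGraph V) [Fintype V] (f : V → ℕ) (hf : IsTRDF G f) :
    gammaTR G ≤ ∑ w, f w :=
  Nat.sInf_le ⟨f, hf, rfl⟩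

theorem stmt8 (G : SimpleGraph V) [Fintype V] (h : NoIsolated G) (u v : V)
    (huv : u ≠ v) (hne : ¬G.Adj u v)
    (hcrit : gammaTR (addEdge G u v) < gammaTR G) (f : V → ℕ)
    (hf : IsTRDF (addEdge G u v) f) (hmin : ∑ w, f w = gammaTR (addEdge G u v)) :
    ¬(f u = 0 ∧ f v ≤ 1) ∧ ¬(f v = 0 ∧ f u ≤ 1) := by
  constructor
  · rintro ⟨h1, h2⟩
    have := gammaTR_le G f (key_trdf G u v f hf h1 h2)
    omega
  · rintro ⟨h1, h2⟩
    rw [addEdge_comm] at hf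
    have := gammaTR_le G f (key_trdf G v u f hf h1 h2)
    omega
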